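/- arXiv:2602.08739 — 5 statements merged into one kernel-verified Lean document; each statement's English description precedes it below -/
import Mathlib

section
/- Let β > 0 and let m, N be integers with 1 ≤ m < N. Then for all (x_1,…,x_m) ∈ ℝ^m, ρ_{N,β}^{(m)}(x_1,…,x_m) = (N!/(N−m)!) · (Z_{N−m,β}/Z_{N,β}) · ∏_{1≤j<k≤m}|e^{ix_j}−e^{ix_k}|^β · E_{CβE_{N−m}}[ |X_{N−m}(1)|^{mβ} ] · E_{CJ_{N−m,β,mβ/2}}[ ∏_{j=2}^m |q_{N−m}^{β,mβ/2}(e^{i(x_j−x_1)})|^β ]. -/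
open MeasureTheory Real Finset

noncomputable section

/-- The CβE weight `∏_{j<k} |e^{iθ_j} - e^{iθ_k}|^β`. -/
def cbeWeight (β : ℝ) (N : ℕ) (θ : Fin N → ℝ) : ℝ :=
  ∏ p ∈ Finset.univ.filter (fun p : Fin N × Fin N => p.1 < p.2),
    ‖Complex.exp ((θ p.1 : ℂ) * Complex.I) - Complex.exp ((θ p.2 : ℂ) * Complex.I)‖ ^ β

/-- The cube `[-π, π)^N`. -/
def cbeDomain (N : ℕ) : Set (Fin N → ℝ) := Set.univ.pi fun _ => Set.Ico (-π) π

/-- Normalisation constant of the CβE. -/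
def cbeZ (β : ℝ) (N : ℕ) : ℝ := ∫ θ in cbeDomain N, cbeWeight β N θ

/-- Expectation with respect to the CβE. -/
def cbeExp (β : ℝ) (N : ℕ) (F : (Fin N → ℝ) → ℝ) : ℝ :=
  (∫ θ in cbeDomain N, F θ * cbeWeight β N θ) / cbeZ β N

/-- The characteristic polynomial `X_N(z) = ∏_j (1 - z e^{-iθ_j})`. -/
def charPoly (N : ℕ) (θ : Fin N → ℝ) (z : ℂ) : ℂ :=
  ∏ j : Fin N, (1 - z * Complex.exp (-(θ j : ℂ) * Complex.I))

/-- The circular Jacobi weight. -/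
def cjWeight (β δ : ℝ) (N : ℕ) (θ : Fin N → ℝ) : ℝ :=
  cbeWeight β N θ * ∏ j : Fin N, ‖1 - Complex.exp ((θ j : ℂ) * Complex.I)‖ ^ (2 * δ)

/-- Expectation with respect to the circular Jacobi β ensemble `CJ_{N,β,δ}`. -/
def cjExp (β δ : ℝ) (N : ℕ) (F : (Fin N → ℝ) → ℝ) : ℝ :=
  (∫ θ in cbeDomain N, F θ * cjWeight β δ N θ) / ∫ θ in cbeDomain N, cjWeight β δ N θ

/-- The normalised characteristic polynomial `q_N^{β,δ}(z) = ∏_j (z - e^{iθ_j})/(1 - e^{iθ_j})`. -/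
def qPoly (N : ℕ) (θ : Fin N → ℝ) (z : ℂ) : ℂ :=
  ∏ j : Fin N, (z - Complex.exp ((θ j : ℂ) * Complex.I)) / (1 - Complex.exp ((θ j : ℂ) * Complex.I))

/-- The `m`-th correlation function of the CβE with `N = m + k` points:
`ρ_{N,β}^{(m)}(x) = (N!/(N-m)!) (1/Z_{N,β}) ∫_{[-π,π)^{N-m}} w_{N,β}(x, θ) dθ`. -/
def cbeCorr (β : ℝ) (m k : ℕ) (x : Fin m → ℝ) : ℝ :=
  ((m + k).factorial : ℝ) / (k.factorial : ℝ) / cbeZ β (m + k) *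
    ∫ θ in cbeDomain k, cbeWeight β (m + k) (Fin.append x θ)

/-!
Split the `m + k` points into the fixed `x` and the free `θ`: the CβE weight factors as
`w_m(x) · ∏_{j,l} |e^{ix_j} - e^{iθ_l}|^β · w_k(θ)`. The last two factors depend on `θ` only
through the points `e^{iθ_l}`, so by invariance of Haar measure on the torus `(ℝ/2πℤ)^k` we may
rotate every `θ_l` by `x_1`. After the rotation the `j = 1` cross factor is `∏_l |1 - e^{iθ_l}|^β`;
dividing each of the other `m - 1` cross factors by it gives `|q_k(e^{i(x_j - x_1)})|^β`, and the
`m` copies of it left over turn `w_k` into the circular Jacobi weight with `2δ = mβ`. That weight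
is also `|X_k(1)|^{mβ} w_k`, so the Jacobi normalisation cancels between the two expectations.
-/

theorem Finset.prod_filter_fst_lt_snd {α M : Type*} [Fintype α] [LinearOrder α] [CommMonoid M]
    (f : α → α → M) :
    ∏ p ∈ univ.filter (fun p : α × α => p.1 < p.2), f p.1 p.2
      = ∏ i, ∏ j, if i < j then f i j else 1 := by
  rw [prod_filter, Fintype.prod_prod_type]

theorem Fin.prod_filter_fst_lt_snd_add {M : Type*} [CommMonoid M] {m k : ℕ}
    (f : Fin (m + k) → Fin (m + k) → M) :
    ∏ p ∈ univ.filter (fun p : Fin (m + k) × Fin (m + k) => p.1 < p.2), f p.1 p.2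
      = (∏ p ∈ univ.filter (fun p : Fin m × Fin m => p.1 < p.2),
            f (castAdd k p.1) (castAdd k p.2))
        * ((∏ i : Fin m, ∏ l : Fin k, f (castAdd k i) (natAdd m l))
          * ∏ p ∈ univ.filter (fun p : Fin k × Fin k => p.1 < p.2),
              f (natAdd m p.1) (natAdd m p.2)) := by
  have hlt (i : Fin m) (l : Fin k) : castAdd k i < natAdd m l := by
    simp only [Fin.lt_def, val_castAdd, val_natAdd]; omega
  rw [prod_filter_fst_lt_snd, prod_filter_fst_lt_snd (fun i j => f (castAdd k i) (castAdd k j)),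
    prod_filter_fst_lt_snd (fun i j => f (natAdd m i) (natAdd m j))]
  simp only [Fin.prod_univ_add, (strictMono_castAdd k).lt_iff_lt, natAdd_lt_natAdd_iff, hlt,
    (hlt _ _).not_gt, if_true, if_false, prod_const_one, mul_one, prod_mul_distrib]

theorem Finset.prod_erase_div_mul_pow_card {ι K : Type*} [Fintype ι] [DecidableEq ι] [Field K]
    (P : ι → K) (i₀ : ι) :
    (∏ j ∈ univ.erase i₀, P j / P i₀) * P i₀ ^ Fintype.card ι = ∏ j, P j := by
  obtain ⟨n, hn⟩ := Nat.exists_eq_succ_of_ne_zero (Fintype.card_pos_iff.2 ⟨i₀⟩).ne'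
  rw [← mul_prod_erase univ P (mem_univ i₀), prod_div_distrib, prod_const,
    card_erase_of_mem (mem_univ i₀), card_univ, hn, Nat.succ_sub_one, pow_succ]
  rcases eq_or_ne (P i₀) 0 with h | h
  · simp [h]
  · field_simp

open Complex in
theorem norm_one_sub_exp_neg_mul_I (t : ℝ) :
    ‖1 - exp (-(t : ℂ) * I)‖ = ‖1 - exp ((t : ℂ) * I)‖ := by
  rw [← Complex.norm_conj, map_sub, map_one, ← exp_conj]
  simp

theorem norm_exp_add_mul_I_sub_exp_add_mul_I (a b c : ℝ) :
    ‖Complex.exp (↑(a + c) * Complex.I) - Complex.exp (↑(b + c) * Complex.I)‖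
      = ‖Complex.exp (↑a * Complex.I) - Complex.exp (↑b * Complex.I)‖ := by
  simp only [← Circle.coe_exp, Circle.exp_add, Circle.coe_mul, ← sub_mul, norm_mul,
    Circle.norm_coe, mul_one]

theorem setIntegral_cbeDomain_rotate {k : ℕ} (F : (Fin k → ℂ) → ℝ) (hF : Measurable F)
    (c : ℝ) :
    ∫ θ in cbeDomain k, F (fun l => Complex.exp (↑(θ l + c) * Complex.I))
      = ∫ θ in cbeDomain k, F (fun l => Complex.exp (↑(θ l) * Complex.I)) := by
  have : Fact (0 < 2 * π) := ⟨by positivity⟩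
  -- Pass to the torus `(ℝ/2πℤ)^k`, where the rotation is a translation for Haar measure.
  set Φ : (Fin k → ℝ) → (Fin k → AddCircle (2 * π)) := fun θ i => θ i
  have hΦ : MeasurePreserving Φ (volume.restrict (cbeDomain k)) volume := by
    have hIoc : (volume : Measure (Fin k → ℝ)).restrict (cbeDomain k)
        = Measure.pi fun _ => volume.restrict (Set.Ioc (-π) (-π + 2 * π)) := by
      rw [cbeDomain, volume_pi, Measure.restrict_pi_pi, show -π + 2 * π = π by ring]
      exact congrArg Measure.pi (funext fun _ => Measure.restrict_congr_set Ico_ae_eq_Ioc)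
    rw [hIoc, volume_pi]
    exact measurePreserving_pi _ _ fun _ => AddCircle.measurePreserving_mk (2 * π) (-π)
  set g : (Fin k → AddCircle (2 * π)) → ℝ := fun y => F fun l => AddCircle.toCircle (y l)
  have hg : Measurable g := hF.comp (measurable_pi_lambda _ fun l =>
    (continuous_subtype_val.comp AddCircle.continuous_toCircle).measurable.comp
      (measurable_pi_apply l))
  have hexp (t : ℝ) :
      Complex.exp (t * Complex.I) = AddCircle.toCircle (t : AddCircle (2 * π)) := by
    rw [AddCircle.toCircle_apply_mk, Circle.coe_exp, div_self (by positivity), one_mul]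
  have hcomp (h : (Fin k → AddCircle (2 * π)) → ℝ) (hh : Measurable h) :
      ∫ θ in cbeDomain k, h (Φ θ) = ∫ y, h y := by
    rw [← hΦ.map_eq, integral_map hΦ.measurable.aemeasurable hh.aestronglyMeasurable]
  calc ∫ θ in cbeDomain k, F (fun l => Complex.exp (↑(θ l + c) * Complex.I))
      = ∫ θ in cbeDomain k, g (Φ θ + fun _ => (c : AddCircle (2 * π))) := by
        simp only [hexp, g, Φ, Pi.add_apply, AddCircle.coe_add]
    _ = ∫ θ in cbeDomain k, g (Φ θ) := by
        rw [hcomp (fun y => g (y + fun _ => (c : AddCircle (2 * π))))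
          (hg.comp (measurable_add_const _)), integral_add_right_eq_self, hcomp _ hg]
    _ = ∫ θ in cbeDomain k, F (fun l => Complex.exp (↑(θ l) * Complex.I)) := by
        simp only [hexp, g, Φ]

theorem injOn_exp_mul_I_Ico :
    Set.InjOn (fun t : ℝ => Complex.exp (t * Complex.I)) (Set.Ico (-π) π) :=
  Subtype.val_injective.comp_injOn (Circle.exp_injOn_Ico (by ring_nf; rfl))

theorem exists_injective_mem_Ioo_zero_pi (k : ℕ) :
    ∃ θ : Fin k → ℝ, Function.Injective θ ∧ ∀ i, θ i ∈ Set.Ioo 0 π := by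
  refine ⟨fun i => π * ((i + 1 : ℕ) / (k + 1 : ℕ)), fun i j h => ?_,
    fun i => ⟨by positivity, ?_⟩⟩
  · simp only [mul_eq_mul_left_iff, pi_ne_zero, or_false] at h
    field_simp at h
    exact Fin.ext (Nat.succ_injective (by exact_mod_cast h))
  · have : ((i + 1 : ℕ) : ℝ) / (k + 1 : ℕ) < 1 := by
      rw [div_lt_one (by positivity)]; exact_mod_cast Nat.succ_lt_succ i.isLt
    nlinarith [pi_pos]

theorem continuous_cbeWeight {β : ℝ} (hβ : 0 ≤ β) (N : ℕ) : Continuous (cbeWeight β N) :=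
  continuous_finsetProd _ fun _ _ => (by fun_prop : Continuous _).rpow_const fun _ => Or.inr hβ

theorem continuous_cjWeight {β δ : ℝ} (hβ : 0 ≤ β) (hδ : 0 ≤ δ) (N : ℕ) :
    Continuous (cjWeight β δ N) :=
  (continuous_cbeWeight hβ N).mul <| continuous_finsetProd _ fun _ _ =>
    (by fun_prop : Continuous _).rpow_const fun _ => Or.inr (by positivity)

theorem cbeWeight_nonneg (β : ℝ) {N : ℕ} (θ : Fin N → ℝ) : 0 ≤ cbeWeight β N θ :=
  prod_nonneg fun _ _ => rpow_nonneg (norm_nonneg _) _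

theorem cjWeight_nonneg (β δ : ℝ) {N : ℕ} (θ : Fin N → ℝ) : 0 ≤ cjWeight β δ N θ :=
  mul_nonneg (cbeWeight_nonneg β θ) (prod_nonneg fun _ _ => rpow_nonneg (norm_nonneg _) _)

theorem cbeWeight_pos (β : ℝ) {N : ℕ} {θ : Fin N → ℝ} (hθ : ∀ i, θ i ∈ Set.Ico (-π) π)
    (hinj : Function.Injective θ) : 0 < cbeWeight β N θ :=
  prod_pos fun _ hp => rpow_pos_of_pos (norm_pos_iff.2 <| sub_ne_zero.2 fun h =>
    (mem_filter.1 hp).2.ne (hinj (injOn_exp_mul_I_Ico (hθ _) (hθ _) h))) _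

theorem cjWeight_pos (β δ : ℝ) {N : ℕ} {θ : Fin N → ℝ} (hθ : ∀ i, θ i ∈ Set.Ico (-π) π)
    (hinj : Function.Injective θ) (hθ0 : ∀ i, θ i ≠ 0) : 0 < cjWeight β δ N θ := by
  refine mul_pos (cbeWeight_pos β hθ hinj) (prod_pos fun i _ => rpow_pos_of_pos ?_ _)
  refine norm_pos_iff.2 (sub_ne_zero.2 fun h => hθ0 i (Eq.symm ?_))
  refine injOn_exp_mul_I_Ico ⟨by linarith [pi_pos], pi_pos⟩ (hθ i) ?_
  simpa using h

theorem setIntegral_cbeDomain_pos {k : ℕ} {f : (Fin k → ℝ) → ℝ} (hf : Continuous f)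
    (hf0 : ∀ θ, 0 ≤ f θ) {θ₀ : Fin k → ℝ} (hθ₀ : ∀ i, θ₀ i ∈ Set.Ioo (-π) π)
    (hpos : 0 < f θ₀) : 0 < ∫ θ in cbeDomain k, f θ := by
  have hint : IntegrableOn f (cbeDomain k) :=
    (hf.continuousOn.integrableOn_compact (isCompact_univ_pi fun _ => isCompact_Icc)).mono_set
      (Set.pi_mono fun _ _ => Set.Ico_subset_Icc_self)
  rw [setIntegral_pos_iff_support_of_nonneg_ae (ae_of_all _ hf0) hint]
  have hopen : IsOpen (Function.support f ∩ Set.univ.pi fun _ => Set.Ioo (-π) π) :=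
    hf.isOpen_support.inter (isOpen_set_pi Set.finite_univ fun _ _ => isOpen_Ioo)
  exact (hopen.measure_pos volume ⟨θ₀, hpos.ne', fun i _ => hθ₀ i⟩).trans_le
    (measure_mono <| Set.inter_subset_inter_right _ <|
      Set.pi_mono fun _ _ => Set.Ioo_subset_Ico_self)

theorem cbeZ_pos {β : ℝ} (hβ : 0 ≤ β) (k : ℕ) : 0 < cbeZ β k := by
  obtain ⟨θ, hinj, hθ⟩ := exists_injective_mem_Ioo_zero_pi k
  have hθ' (i : Fin k) : θ i ∈ Set.Ioo (-π) π := ⟨by linarith [(hθ i).1, pi_pos], (hθ i).2⟩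
  exact setIntegral_cbeDomain_pos (continuous_cbeWeight hβ k) (cbeWeight_nonneg β) hθ'
    (cbeWeight_pos β (fun i => Set.Ioo_subset_Ico_self (hθ' i)) hinj)

theorem integral_cjWeight_pos {β δ : ℝ} (hβ : 0 ≤ β) (hδ : 0 ≤ δ) (k : ℕ) :
    0 < ∫ θ in cbeDomain k, cjWeight β δ k θ := by
  obtain ⟨θ, hinj, hθ⟩ := exists_injective_mem_Ioo_zero_pi k
  have hθ' (i : Fin k) : θ i ∈ Set.Ioo (-π) π := ⟨by linarith [(hθ i).1, pi_pos], (hθ i).2⟩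
  exact setIntegral_cbeDomain_pos (continuous_cjWeight hβ hδ k) (cjWeight_nonneg β δ) hθ'
    (cjWeight_pos β δ (fun i => Set.Ioo_subset_Ico_self (hθ' i)) hinj fun i => (hθ i).1.ne')

def crossWeight (β : ℝ) {m k : ℕ} (x : Fin m → ℝ) (θ : Fin k → ℝ) : ℝ :=
  ∏ j, ∏ l, ‖Complex.exp ((x j : ℂ) * Complex.I) - Complex.exp ((θ l : ℂ) * Complex.I)‖ ^ β

theorem cbeWeight_append (β : ℝ) {m k : ℕ} (x : Fin m → ℝ) (θ : Fin k → ℝ) :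
    cbeWeight β (m + k) (Fin.append x θ)
      = cbeWeight β m x * (crossWeight β x θ * cbeWeight β k θ) := by
  rw [cbeWeight, Fin.prod_filter_fst_lt_snd_add (fun a b =>
    ‖Complex.exp (((Fin.append x θ a : ℝ) : ℂ) * Complex.I)
      - Complex.exp (((Fin.append x θ b : ℝ) : ℂ) * Complex.I)‖ ^ β)]
  simp only [Fin.append_left, Fin.append_right]
  rfl

theorem cbeWeight_add_const (β : ℝ) {N : ℕ} (θ : Fin N → ℝ) (c : ℝ) :
    cbeWeight β N (fun l => θ l + c) = cbeWeight β N θ :=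
  prod_congr rfl fun _ _ => by rw [norm_exp_add_mul_I_sub_exp_add_mul_I]

theorem norm_charPoly_one_rpow_mul_cbeWeight (β δ : ℝ) {N : ℕ} (θ : Fin N → ℝ) :
    ‖charPoly N θ 1‖ ^ (2 * δ) * cbeWeight β N θ = cjWeight β δ N θ := by
  rw [charPoly, cjWeight, mul_comm, norm_prod,
    ← finsetProd_rpow _ _ fun _ _ => norm_nonneg _]
  simp only [one_mul, norm_one_sub_exp_neg_mul_I]

theorem cjWeight_natCast_mul_div_two (β : ℝ) (m : ℕ) {N : ℕ} (θ : Fin N → ℝ) :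
    cjWeight β ((m : ℝ) * β / 2) N θ
      = cbeWeight β N θ * (∏ l, ‖1 - Complex.exp ((θ l : ℂ) * Complex.I)‖ ^ β) ^ m := by
  rw [cjWeight, ← prod_pow]
  congr 2 with l
  rw [show 2 * ((m : ℝ) * β / 2) = β * m by ring, rpow_mul (norm_nonneg _), rpow_natCast]

theorem norm_qPoly_rpow (β : ℝ) {N : ℕ} (θ : Fin N → ℝ) (z : ℂ) :
    ‖qPoly N θ z‖ ^ β
      = (∏ l, ‖z - Complex.exp ((θ l : ℂ) * Complex.I)‖ ^ β)
        / ∏ l, ‖1 - Complex.exp ((θ l : ℂ) * Complex.I)‖ ^ β := by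
  rw [qPoly, norm_prod, ← finsetProd_rpow _ _ fun _ _ => norm_nonneg _, ← prod_div_distrib]
  simp only [norm_div, div_rpow (norm_nonneg _) (norm_nonneg _)]

theorem prod_norm_qPoly_rpow_mul_cjWeight (β : ℝ) {m k : ℕ} (hm : 1 ≤ m) (x : Fin m → ℝ)
    (θ : Fin k → ℝ) :
    (∏ j ∈ univ.filter (fun j : Fin m => (j : ℕ) ≠ 0),
        ‖qPoly k θ (Complex.exp (((x j - x ⟨0, hm⟩ : ℝ) : ℂ) * Complex.I))‖ ^ β)
      * cjWeight β ((m : ℝ) * β / 2) k θ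
    = crossWeight β x (fun l => θ l + x ⟨0, hm⟩)
      * cbeWeight β k (fun l => θ l + x ⟨0, hm⟩) := by
  set j₀ : Fin m := ⟨0, hm⟩
  set P : Fin m → ℝ := fun j =>
    ∏ l, ‖Complex.exp (((x j - x j₀ : ℝ) : ℂ) * Complex.I)
      - Complex.exp ((θ l : ℂ) * Complex.I)‖ ^ β
  have hP₀ : P j₀ = ∏ l, ‖1 - Complex.exp ((θ l : ℂ) * Complex.I)‖ ^ β := by
    simp only [P, sub_self, Complex.ofReal_zero, zero_mul, Complex.exp_zero]
  have hfilter : univ.filter (fun j : Fin m => (j : ℕ) ≠ 0) = univ.erase j₀ := by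
    ext j; simp [j₀, Fin.ext_iff]
  have hcross : crossWeight β x (fun l => θ l + x j₀) = ∏ j, P j := by
    refine prod_congr rfl fun j _ => prod_congr rfl fun l _ => ?_
    rw [← norm_exp_add_mul_I_sub_exp_add_mul_I (x j - x j₀) (θ l) (x j₀), sub_add_cancel]
  rw [hfilter, cjWeight_natCast_mul_div_two, ← hP₀, cbeWeight_add_const, hcross,
    ← Finset.prod_erase_div_mul_pow_card P j₀, Fintype.card_fin]
  simp only [norm_qPoly_rpow, ← hP₀]
  ring

theorem setIntegral_crossWeight_mul_cbeWeight_eq (β : ℝ) {m k : ℕ} (hm : 1 ≤ m)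
    (x : Fin m → ℝ) :
    ∫ θ in cbeDomain k, crossWeight β x θ * cbeWeight β k θ
      = ∫ θ in cbeDomain k,
          (∏ j ∈ univ.filter (fun j : Fin m => (j : ℕ) ≠ 0),
            ‖qPoly k θ (Complex.exp (((x j - x ⟨0, hm⟩ : ℝ) : ℂ) * Complex.I))‖ ^ β)
          * cjWeight β ((m : ℝ) * β / 2) k θ := by
  set F : (Fin k → ℂ) → ℝ := fun z =>
    (∏ j, ∏ l, ‖Complex.exp ((x j : ℂ) * Complex.I) - z l‖ ^ β)
      * ∏ p ∈ univ.filter (fun p : Fin k × Fin k => p.1 < p.2), ‖z p.1 - z p.2‖ ^ β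
  have hF : Measurable F := by fun_prop
  calc ∫ θ in cbeDomain k, crossWeight β x θ * cbeWeight β k θ
      = ∫ θ in cbeDomain k, F fun l => Complex.exp ((θ l : ℂ) * Complex.I) := rfl
    _ = ∫ θ in cbeDomain k,
          F fun l => Complex.exp (((θ l + x ⟨0, hm⟩ : ℝ) : ℂ) * Complex.I) :=
        (setIntegral_cbeDomain_rotate F hF _).symm
    _ = _ := by simp only [F, prod_norm_qPoly_rpow_mul_cjWeight]; rfl

theorem statement1_general (β : ℝ) (hβ : 0 < β) (m k : ℕ) (hm : 1 ≤ m)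
    (x : Fin m → ℝ) :
    cbeCorr β m k x
    = ((m + k).factorial : ℝ) / (k.factorial : ℝ) * (cbeZ β k / cbeZ β (m + k))
      * (∏ p ∈ Finset.univ.filter (fun p : Fin m × Fin m => p.1 < p.2),
          ‖Complex.exp ((x p.1 : ℂ) * Complex.I)
            - Complex.exp ((x p.2 : ℂ) * Complex.I)‖ ^ β)
      * cbeExp β k (fun θ => ‖charPoly k θ 1‖ ^ ((m : ℝ) * β))
      * cjExp β ((m : ℝ) * β / 2) k (fun θ =>
          ∏ j ∈ Finset.univ.filter (fun j : Fin m => (j : ℕ) ≠ 0),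
            ‖qPoly k θ
              (Complex.exp (((x j - x ⟨0, hm⟩ : ℝ) : ℂ) * Complex.I))‖ ^ β) := by
  have hZ : cbeZ β k ≠ 0 := (cbeZ_pos hβ.le k).ne'
  set A := ∫ θ in cbeDomain k, cjWeight β ((m : ℝ) * β / 2) k θ
  have hA : A ≠ 0 := (integral_cjWeight_pos hβ.le (by positivity) k).ne'
  have hcorr : cbeCorr β m k x = ((m + k).factorial : ℝ) / (k.factorial : ℝ) / cbeZ β (m + k)
      * (cbeWeight β m x * ∫ θ in cbeDomain k, crossWeight β x θ * cbeWeight β k θ) := by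
    simp only [cbeCorr, cbeWeight_append, integral_const_mul]
  have hmoment : ∫ θ in cbeDomain k, ‖charPoly k θ 1‖ ^ ((m : ℝ) * β) * cbeWeight β k θ = A := by
    simp only [A, ← norm_charPoly_one_rpow_mul_cbeWeight β ((m : ℝ) * β / 2),
      show 2 * ((m : ℝ) * β / 2) = m * β by ring]
  have hcancel (c Z w I : ℝ) :
      c / Z * (w * I) = c * (cbeZ β k / Z) * w * (A / cbeZ β k) * (I / A) := by
    field_simp
  rw [hcorr, cbeExp, cjExp, hmoment, setIntegral_crossWeight_mul_cbeWeight_eq β hm]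
  -- `w` unifies with the product over pairs, which is `cbeWeight β m x` unfolded.
  exact hcancel _ _ _ _

/-- Proposition `CbetaECorr`: representation of the `m`-point correlation function of
`CβE_N` (with `N = m + k`, `k ≥ 1`) in terms of moments of the characteristic polynomial and of
the normalised characteristic polynomial of the circular Jacobi ensemble `CJ_{N-m,β,mβ/2}`. -/
theorem statement1 (β : ℝ) (hβ : 0 < β) (m k : ℕ) (hm : 1 ≤ m) (hk : 1 ≤ k)
    (x : Fin m → ℝ) :
    cbeCorr β m k x
    = ((m + k).factorial : ℝ) / (k.factorial : ℝ) * (cbeZ β k / cbeZ β (m + k))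
      * (∏ p ∈ Finset.univ.filter (fun p : Fin m × Fin m => p.1 < p.2),
          ‖Complex.exp ((x p.1 : ℂ) * Complex.I)
            - Complex.exp ((x p.2 : ℂ) * Complex.I)‖ ^ β)
      * cbeExp β k (fun θ => ‖charPoly k θ 1‖ ^ ((m : ℝ) * β))
      * cjExp β ((m : ℝ) * β / 2) k (fun θ =>
          ∏ j ∈ Finset.univ.filter (fun j : Fin m => (j : ℕ) ≠ 0),
            ‖qPoly k θ
              (Complex.exp (((x j - x ⟨0, hm⟩ : ℝ) : ℂ) * Complex.I))‖ ^ β) :=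
  statement1_general β hβ m k hm x

end
end

section
/- Let m ≥ 1 be an integer and let a, b ≥ 0 be real numbers such that a + (m−1)b/2 > 1 and ma > 1. Then ∫_{ℝ^m} ∏_{j=1}^m 1/(1 + |x_j|^a) · ∏_{1≤i<j≤m} 1/(1 + |x_i − x_j|^b) dx_1⋯dx_m < ∞. -/
/-!
Write `w_r(t) = (1 + |t|)^(-r)`, so that `1 / (1 + |t|^c) ≤ 2^c w_c(t)`. Once the coordinates are
sorted increasingly, the distance between the `i`-th and the `j`-th point dominates both the gap
following point `i` and the gap preceding point `j`; every consecutive gap is counted `m` times in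
this way, so the pair product is at most the product of `w_{mb/2}` over the `m - 1` consecutive
gaps. Summing over the `m!` orderings reduces the claim to the finiteness of the chain integral
`∫ ∏_j w_a(x_j) ∏_k w_β(x_{k+1} - x_k)` with `β = mb/2`. This integral is computed from the end
of the chain: `∫ w_α(t) w_β(t - y) dt ≤ C w_γ(y)` as soon as `0 ≤ γ ≤ α`, `γ ≤ β` and
`γ + 1 < α + β` (one of `|t|`, `|t - y|` is at least `|y| / 2`), so each integration passes the
decay `γ = min(a, b/2)` on to the preceding point. The last integral is `∫ w_{a + (m-1)γ}`, finite
because `a + (m-1)b/2 > 1` and `ma > 1`.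
-/

open MeasureTheory ENNReal Finset

noncomputable def decayWeight (r t : ℝ) : ℝ≥0∞ := ENNReal.ofReal ((1 + |t|) ^ (-r))

@[fun_prop]
lemma measurable_decayWeight (r : ℝ) : Measurable (decayWeight r) :=
  ((measurable_const.add measurable_abs).pow_const _).ennreal_ofReal

lemma decayWeight_add (r s t : ℝ) :
    decayWeight (r + s) t = decayWeight r t * decayWeight s t := by
  rw [decayWeight, decayWeight, decayWeight, ← ENNReal.ofReal_mul (by positivity), neg_add,
    Real.rpow_add (by positivity)]

lemma decayWeight_zero (t : ℝ) : decayWeight 0 t = 1 := by simp [decayWeight]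

lemma decayWeight_neg (r t : ℝ) : decayWeight r (-t) = decayWeight r t := by
  simp [decayWeight]

lemma decayWeight_pow (r t : ℝ) (N : ℕ) : decayWeight r t ^ N = decayWeight (N * r) t := by
  rw [decayWeight, decayWeight, ← ENNReal.ofReal_pow (by positivity),
    ← Real.rpow_mul_natCast (by positivity)]
  ring_nf

lemma decayWeight_anti {r : ℝ} (hr : 0 ≤ r) {u v : ℝ} (h : |u| ≤ |v|) :
    decayWeight r v ≤ decayWeight r u :=
  ENNReal.ofReal_le_ofReal <|
    Real.rpow_le_rpow_of_nonpos (by positivity) (by linarith) (by linarith)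

lemma decayWeight_mul_le_add {p q : ℝ} (hp : 0 ≤ p) (hq : 0 ≤ q) (t u : ℝ) :
    decayWeight p t * decayWeight q u ≤ decayWeight (p + q) t + decayWeight (p + q) u := by
  rcases le_total |t| |u| with h | h
  · calc decayWeight p t * decayWeight q u ≤ decayWeight p t * decayWeight q t := by
          gcongr; exact decayWeight_anti hq h
      _ ≤ _ := (decayWeight_add p q t).symm.le.trans le_self_add
  · calc decayWeight p t * decayWeight q u ≤ decayWeight p u * decayWeight q u := by
          gcongr; exact decayWeight_anti hp h
      _ ≤ _ := (decayWeight_add p q u).symm.le.trans le_add_self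

lemma decayWeight_le_of_abs_le_two_mul {r : ℝ} (hr : 0 ≤ r) {u v : ℝ} (h : |v| ≤ 2 * |u|) :
    decayWeight r u ≤ ENNReal.ofReal (2 ^ r) * decayWeight r v := by
  rw [decayWeight, decayWeight, ← ENNReal.ofReal_mul (by positivity)]
  apply ENNReal.ofReal_le_ofReal
  calc (1 + |u|) ^ (-r) ≤ ((1 + |v|) / 2) ^ (-r) :=
        Real.rpow_le_rpow_of_nonpos (by positivity) (by linarith) (by linarith)
    _ = 2 ^ r * (1 + |v|) ^ (-r) := by
        rw [Real.div_rpow (by positivity) zero_le_two, Real.rpow_neg zero_le_two, div_inv_eq_mul,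
          mul_comm]

lemma lintegral_decayWeight_lt_top {r : ℝ} (hr : 1 < r) : ∫⁻ t, decayWeight r t < ⊤ := by
  simpa [decayWeight] using
    finite_integral_one_add_norm (E := ℝ) (μ := volume) (r := r) (by simpa using hr)

lemma ofReal_one_div_one_add_rpow_le {c : ℝ} (hc : 0 ≤ c) (t : ℝ) :
    ENNReal.ofReal (1 / (1 + |t| ^ c)) ≤ ENNReal.ofReal (2 ^ c) * decayWeight c t := by
  rw [decayWeight, ← ENNReal.ofReal_mul (by positivity)]
  apply ENNReal.ofReal_le_ofReal
  -- `1 + |t| ≤ 2 max 1 |t|`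
  have key : (1 + |t|) ^ c ≤ 2 ^ c * (1 + |t| ^ c) := by
    rcases le_total |t| 1 with h | h
    · have : (1 + |t|) ^ c ≤ 2 ^ c := Real.rpow_le_rpow (by positivity) (by linarith) hc
      exact this.trans (le_mul_of_one_le_right (by positivity)
        (by linarith [Real.rpow_nonneg (abs_nonneg t) c]))
    · have : (1 + |t|) ^ c ≤ (2 * |t|) ^ c := Real.rpow_le_rpow (by positivity) (by linarith) hc
      rw [Real.mul_rpow zero_le_two (abs_nonneg t)] at this
      nlinarith [Real.rpow_nonneg zero_le_two c]
  rw [Real.rpow_neg (by positivity), one_div, le_mul_inv_iff₀ (by positivity), ← div_eq_inv_mul,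
    div_le_iff₀ (by positivity)]
  exact key

lemma exists_lintegral_decayWeight_mul_shift_le {α β γ : ℝ} (hγ : 0 ≤ γ) (hγα : γ ≤ α)
    (hγβ : γ ≤ β) (hs : γ + 1 < α + β) :
    ∃ C : ℝ≥0∞, C ≠ ⊤ ∧
      ∀ y, ∫⁻ t, decayWeight α t * decayWeight β (t - y) ≤ C * decayWeight γ y := by
  set s := α + β - γ with hs_def
  set K := ∫⁻ t, decayWeight s t
  have hK : K ≠ ⊤ := (lintegral_decayWeight_lt_top (by linarith)).ne
  set c := ENNReal.ofReal (2 ^ γ)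
  refine ⟨c * (K + K), by finiteness, fun y => ?_⟩
  have key (t : ℝ) : decayWeight α t * decayWeight β (t - y) ≤
      c * decayWeight γ y * (decayWeight s t + decayWeight s (t - y)) := by
    rcases le_or_gt |y| (2 * |t|) with h | h
    · calc decayWeight α t * decayWeight β (t - y)
          = decayWeight γ t * (decayWeight (α - γ) t * decayWeight β (t - y)) := by
            rw [← mul_assoc, ← decayWeight_add, add_sub_cancel]
        _ ≤ c * decayWeight γ y * (decayWeight s t + decayWeight s (t - y)) := by
            gcongr
            · exact decayWeight_le_of_abs_le_two_mul hγ h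
            · rw [hs_def, show α + β - γ = α - γ + β by ring]
              exact decayWeight_mul_le_add (sub_nonneg.2 hγα) (hγ.trans hγβ) t (t - y)
    · have h' : |y| ≤ 2 * |t - y| := by
        have := abs_sub_abs_le_abs_sub y t
        rw [abs_sub_comm y t] at this
        linarith
      calc decayWeight α t * decayWeight β (t - y)
          = decayWeight γ (t - y) * (decayWeight α t * decayWeight (β - γ) (t - y)) := by
            rw [mul_left_comm, ← decayWeight_add, add_sub_cancel]
        _ ≤ c * decayWeight γ y * (decayWeight s t + decayWeight s (t - y)) := by
            gcongr
            · exact decayWeight_le_of_abs_le_two_mul hγ h'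
            · rw [hs_def, show α + β - γ = α + (β - γ) by ring]
              exact decayWeight_mul_le_add (hγ.trans hγα) (sub_nonneg.2 hγβ) t (t - y)
  calc ∫⁻ t, decayWeight α t * decayWeight β (t - y)
      ≤ ∫⁻ t, c * decayWeight γ y * (decayWeight s t + decayWeight s (t - y)) := lintegral_mono key
    _ = c * decayWeight γ y * (K + K) := by
        rw [lintegral_const_mul _ (by fun_prop), lintegral_add_left (by fun_prop),
          lintegral_sub_right_eq_self]
    _ = c * (K + K) * decayWeight γ y := by ring

section pairs

variable {ι M : Type*} [LinearOrder ι] [Fintype ι] [CommMonoid M]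

theorem prod_filter_lt_eq_prod_filter_not_isDiag (F : Sym2 ι → M) :
    ∏ p ∈ univ.filter (fun p : ι × ι => p.1 < p.2), F s(p.1, p.2) =
      ∏ z ∈ univ.filter (fun z : Sym2 ι => ¬ z.IsDiag), F z := by
  have := sum_sym2_filter_not_isDiag (M := Additive M) univ (fun z => Additive.ofMul (F z))
  rw [← ofMul_prod, ← ofMul_prod, sym2_univ, EmbeddingLike.apply_eq_iff_eq] at this
  rw [this]
  congr 1
  ext p
  simp +contextual [ne_of_lt]

theorem prod_filter_lt_comp_perm (G : ι → ι → M) (hG : ∀ i j, G i j = G j i)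
    (σ : Equiv.Perm ι) :
    ∏ p ∈ univ.filter (fun p : ι × ι => p.1 < p.2), G (σ p.1) (σ p.2) =
      ∏ p ∈ univ.filter (fun p : ι × ι => p.1 < p.2), G p.1 p.2 := by
  set g : Sym2 ι → M := Sym2.lift ⟨G, hG⟩
  calc ∏ p ∈ univ.filter (fun p : ι × ι => p.1 < p.2), G (σ p.1) (σ p.2)
      = ∏ z ∈ univ.filter (fun z : Sym2 ι => ¬ z.IsDiag), g (z.map σ) :=
        prod_filter_lt_eq_prod_filter_not_isDiag (fun z => g (z.map σ))
    _ = ∏ z ∈ univ.filter (fun z : Sym2 ι => ¬ z.IsDiag), g z :=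
        prod_nbij' (Sym2.map σ) (Sym2.map σ.symm) (by simp [Sym2.isDiag_map σ.injective])
          (by simp [Sym2.isDiag_map σ.symm.injective]) (by simp [Sym2.map_map])
          (by simp [Sym2.map_map]) (fun _ _ => rfl)
    _ = _ := (prod_filter_lt_eq_prod_filter_not_isDiag g).symm

theorem prod_filter_le_mul_eq_prod_pow (F : ι → M) :
    ∏ q ∈ univ.filter (fun q : ι × ι => q.1 ≤ q.2), F q.1 * F q.2 =
      ∏ i, F i ^ (Fintype.card ι + 1) := by
  have hswap : ∏ q ∈ univ.filter (fun q : ι × ι => q.1 ≤ q.2), F q.2 =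
      ∏ q ∈ univ.filter (fun q : ι × ι => q.2 ≤ q.1), F q.1 :=
    prod_equiv (Equiv.prodComm ι ι) (by simp) (fun _ _ => rfl)
  have hunion : univ.filter (fun q : ι × ι => q.1 ≤ q.2) ∪ univ.filter (fun q => q.2 ≤ q.1) =
      univ := by
    ext q; simp [le_total]
  have hinter : univ.filter (fun q : ι × ι => q.1 ≤ q.2) ∩ univ.filter (fun q => q.2 ≤ q.1) =
      univ.diag := by
    ext q; simp [le_antisymm_iff]
  rw [prod_mul_distrib, hswap, ← prod_union_inter, hunion, hinter, prod_diag,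
    Fintype.prod_prod_type]
  simp [pow_succ, prod_mul_distrib]

end pairs

theorem prod_filter_lt_fin_succ_eq {M : Type*} [CommMonoid M] {n : ℕ}
    (G : Fin (n + 1) → Fin (n + 1) → M) :
    ∏ p ∈ univ.filter (fun p : Fin (n + 1) × Fin (n + 1) => p.1 < p.2), G p.1 p.2 =
      ∏ q ∈ univ.filter (fun q : Fin n × Fin n => q.1 ≤ q.2), G q.1.castSucc q.2.succ := by
  symm
  refine prod_bij (fun q _ => (q.1.castSucc, q.2.succ)) (by simp [Fin.castSucc_lt_succ_iff])
    (by simp +contextual [Prod.ext_iff]) ?_ (fun _ _ => rfl)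
  rintro ⟨i, j⟩ hij
  simp only [mem_filter, mem_univ, true_and] at hij
  obtain ⟨k, rfl⟩ := Fin.exists_castSucc_eq.2 (Fin.ne_last_of_lt hij)
  obtain ⟨l, rfl⟩ := Fin.exists_succ_eq.2 (Fin.ne_zero_of_lt hij)
  exact ⟨(k, l), by simpa [Fin.castSucc_lt_succ_iff] using hij, rfl⟩

lemma prod_filter_lt_decayWeight_le {b : ℝ} (hb : 0 ≤ b) {n : ℕ} {y : Fin (n + 1) → ℝ}
    (hy : Monotone y) :
    ∏ p ∈ univ.filter (fun p : Fin (n + 1) × Fin (n + 1) => p.1 < p.2),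
        decayWeight b (y p.1 - y p.2) ≤
      ∏ k : Fin n, decayWeight ((n + 1) * b / 2) (y k.succ - y k.castSucc) := by
  set g : Fin n → ℝ := fun k => y k.succ - y k.castSucc
  have hg (k : Fin n) : 0 ≤ g k := sub_nonneg.2 (hy k.castSucc_lt_succ.le)
  have hpair (k l : Fin n) (hkl : k ≤ l) :
      decayWeight b (y k.castSucc - y l.succ) ≤
        decayWeight (b / 2) (g k) * decayWeight (b / 2) (g l) := by
    have hk : y k.succ ≤ y l.succ := hy (Fin.succ_le_succ_iff.2 hkl)
    have hl : y k.castSucc ≤ y l.castSucc := hy (Fin.castSucc_le_castSucc_iff.2 hkl)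
    have habs (u : Fin n) (hu : g u ≤ y l.succ - y k.castSucc) :
        |g u| ≤ |y k.castSucc - y l.succ| := by
      rw [abs_of_nonneg (hg u), abs_sub_comm, abs_of_nonneg ((hg u).trans hu)]
      exact hu
    have hb2 : 0 ≤ b / 2 := div_nonneg hb zero_le_two
    calc decayWeight b (y k.castSucc - y l.succ)
        = decayWeight (b / 2) (y k.castSucc - y l.succ) *
            decayWeight (b / 2) (y k.castSucc - y l.succ) := by
          rw [← decayWeight_add, add_halves]
      _ ≤ _ := mul_le_mul' (decayWeight_anti hb2 (habs k (by simp only [g]; linarith)))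
          (decayWeight_anti hb2 (habs l (by simp only [g]; linarith)))
  calc ∏ p ∈ univ.filter (fun p : Fin (n + 1) × Fin (n + 1) => p.1 < p.2),
        decayWeight b (y p.1 - y p.2)
      = ∏ q ∈ univ.filter (fun q : Fin n × Fin n => q.1 ≤ q.2),
          decayWeight b (y q.1.castSucc - y q.2.succ) :=
        prod_filter_lt_fin_succ_eq (fun i j => decayWeight b (y i - y j))
    _ ≤ ∏ q ∈ univ.filter (fun q : Fin n × Fin n => q.1 ≤ q.2),
          decayWeight (b / 2) (g q.1) * decayWeight (b / 2) (g q.2) :=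
        prod_le_prod' fun q hq => hpair q.1 q.2 (by simpa using hq)
    _ = ∏ k : Fin n, decayWeight ((n + 1) * b / 2) (g k) := by
        refine (prod_filter_le_mul_eq_prod_pow (fun k => decayWeight (b / 2) (g k))).trans ?_
        simp only [decayWeight_pow, Fintype.card_fin]
        congr! 2
        push_cast
        ring

noncomputable def chainWeight (a β : ℝ) {n : ℕ} (x : Fin (n + 1) → ℝ) : ℝ≥0∞ :=
  (∏ j, decayWeight a (x j)) * ∏ k : Fin n, decayWeight β (x k.succ - x k.castSucc)

@[fun_prop]
lemma measurable_chainWeight (a β : ℝ) (n : ℕ) :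
    Measurable (chainWeight a β : (Fin (n + 1) → ℝ) → ℝ≥0∞) := by
  unfold chainWeight
  fun_prop

lemma prod_decayWeight_mul_prod_filter_lt_le_sum_chainWeight (a : ℝ) {b : ℝ} (hb : 0 ≤ b)
    {n : ℕ} (x : Fin (n + 1) → ℝ) :
    (∏ j, decayWeight a (x j)) *
        ∏ p ∈ univ.filter (fun p : Fin (n + 1) × Fin (n + 1) => p.1 < p.2),
          decayWeight b (x p.1 - x p.2) ≤
      ∑ σ : Equiv.Perm (Fin (n + 1)), chainWeight a ((n + 1) * b / 2) (x ∘ σ) := by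
  set σ := Tuple.sort x
  have hsymm (i j : Fin (n + 1)) : decayWeight b (x i - x j) = decayWeight b (x j - x i) := by
    rw [← decayWeight_neg, neg_sub]
  calc (∏ j, decayWeight a (x j)) *
        ∏ p ∈ univ.filter (fun p : Fin (n + 1) × Fin (n + 1) => p.1 < p.2),
          decayWeight b (x p.1 - x p.2)
      = (∏ j, decayWeight a (x (σ j))) *
          ∏ p ∈ univ.filter (fun p : Fin (n + 1) × Fin (n + 1) => p.1 < p.2),
            decayWeight b (x (σ p.1) - x (σ p.2)) := by
        rw [Equiv.prod_comp σ (fun j => decayWeight a (x j)),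
          prod_filter_lt_comp_perm (fun i j => decayWeight b (x i - x j)) hsymm]
    _ ≤ chainWeight a ((n + 1) * b / 2) (x ∘ σ) :=
        mul_le_mul_right (prod_filter_lt_decayWeight_le hb (Tuple.monotone_sort x)) _
    _ ≤ _ := single_le_sum (f := fun τ : Equiv.Perm (Fin (n + 1)) => chainWeight a _ (x ∘ τ))
          (fun _ _ => bot_le) (mem_univ σ)

lemma chainWeight_snoc (a β : ℝ) {n : ℕ} (x : Fin (n + 1) → ℝ) (t : ℝ) :
    chainWeight a β (Fin.snoc x t : Fin (n + 2) → ℝ) =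
      chainWeight a β x * (decayWeight a t * decayWeight β (t - x (Fin.last n))) := by
  simp only [chainWeight, Fin.prod_univ_castSucc (n := n + 1), Fin.prod_univ_castSucc (n := n),
    Fin.snoc_castSucc, Fin.snoc_last, Fin.succ_castSucc, Fin.succ_last]
  ring

lemma lintegral_fin_snoc {n : ℕ} {F : (Fin (n + 1) → ℝ) → ℝ≥0∞} (hF : Measurable F) :
    ∫⁻ x, F x = ∫⁻ x : Fin n → ℝ, ∫⁻ t, F (Fin.snoc x t) := by
  have e := (volume_preserving_piFinSuccAbove (fun _ : Fin (n + 1) => ℝ) (Fin.last n)).symm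
  rw [← e.lintegral_comp hF, Measure.volume_eq_prod]
  refine (lintegral_prod_symm' (μ := volume) (ν := volume) _ (hF.comp e.measurable)).trans ?_
  simp only [Function.comp_apply, MeasurableEquiv.piFinSuccAbove_symm_apply, Fin.insertNthEquiv,
    Fin.insertNth_last']
  rfl

lemma lintegral_comp_perm {ι : Type*} [Fintype ι] (F : (ι → ℝ) → ℝ≥0∞) (σ : Equiv.Perm ι) :
    ∫⁻ x, F (x ∘ σ) = ∫⁻ x, F x := by
  have e := volume_measurePreserving_piCongrLeft (fun _ : ι => ℝ) σ
  rw [← e.lintegral_comp_emb (MeasurableEquiv.measurableEmbedding _)]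
  congr! with x
  ext i
  exact MeasurableEquiv.piCongrLeft_apply_apply (β := fun _ => ℝ) σ x i

lemma lintegral_decayWeight_mul_chainWeight_lt_top {a β γ : ℝ} (hγ : 0 ≤ γ) (hγa : γ ≤ a)
    (hs : γ + 1 < a + β) (n : ℕ) {δ : ℝ} (hδ : 0 ≤ δ) (h1 : 1 < a + δ + n * γ)
    (hβ : δ + n * γ ≤ β) :
    ∫⁻ x : Fin (n + 1) → ℝ, decayWeight δ (x (Fin.last n)) * chainWeight a β x < ⊤ := by
  induction n generalizing δ with
  | zero =>
    simp only [Nat.cast_zero, zero_mul, add_zero] at h1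
    calc ∫⁻ x : Fin 1 → ℝ, decayWeight δ (x (Fin.last 0)) * chainWeight a β x
        = ∫⁻ x : Fin 1 → ℝ, decayWeight (a + δ) (MeasurableEquiv.funUnique (Fin 1) ℝ x) := by
          simp [chainWeight, add_comm a δ, decayWeight_add]
      _ = ∫⁻ t, decayWeight (a + δ) t :=
          (volume_preserving_funUnique (Fin 1) ℝ).lintegral_comp (measurable_decayWeight _)
      _ < ⊤ := lintegral_decayWeight_lt_top h1
  | succ n ih =>
    have hnγ : 0 ≤ (n : ℝ) * γ := by positivity
    push_cast at h1 hβ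
    obtain ⟨C, hC, hconv⟩ := exists_lintegral_decayWeight_mul_shift_le (α := a + δ) (β := β)
      (γ := δ + γ) (by positivity) (by linarith) (by linarith) (by linarith)
    calc ∫⁻ x : Fin (n + 2) → ℝ, decayWeight δ (x (Fin.last (n + 1))) * chainWeight a β x
        = ∫⁻ x : Fin (n + 1) → ℝ, chainWeight a β x *
            ∫⁻ t, decayWeight (a + δ) t * decayWeight β (t - x (Fin.last n)) := by
          rw [lintegral_fin_snoc (by fun_prop)]
          refine lintegral_congr fun x => ?_
          rw [← lintegral_const_mul _ (by fun_prop)]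
          refine lintegral_congr fun t => ?_
          rw [Fin.snoc_last, chainWeight_snoc, decayWeight_add]
          ring
      _ ≤ ∫⁻ x : Fin (n + 1) → ℝ,
            chainWeight a β x * (C * decayWeight (δ + γ) (x (Fin.last n))) := by
          gcongr with x
          exact hconv _
      _ = C * ∫⁻ x : Fin (n + 1) → ℝ,
            decayWeight (δ + γ) (x (Fin.last n)) * chainWeight a β x := by
          rw [← lintegral_const_mul _ (by fun_prop)]
          refine lintegral_congr fun x => ?_
          ring
      _ < ⊤ := mul_lt_top hC.lt_top (ih (by positivity) (by linarith) (by linarith))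

lemma exists_ofReal_integrand_le {ι : Type*} [Fintype ι] [LinearOrder ι] {a b : ℝ} (ha : 0 ≤ a)
    (hb : 0 ≤ b) :
    ∃ D : ℝ≥0∞, D ≠ ⊤ ∧ ∀ x : ι → ℝ,
      ENNReal.ofReal ((∏ j, 1 / (1 + |x j| ^ a)) *
          ∏ p ∈ univ.filter (fun p : ι × ι => p.1 < p.2), 1 / (1 + |x p.1 - x p.2| ^ b)) ≤
        D * ((∏ j, decayWeight a (x j)) *
          ∏ p ∈ univ.filter (fun p : ι × ι => p.1 < p.2), decayWeight b (x p.1 - x p.2)) := by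
  set P := univ.filter (fun p : ι × ι => p.1 < p.2)
  refine ⟨ENNReal.ofReal (2 ^ a) ^ Fintype.card ι * ENNReal.ofReal (2 ^ b) ^ #P, by finiteness,
    fun x => ?_⟩
  rw [ENNReal.ofReal_mul (prod_nonneg fun _ _ => by positivity),
    ENNReal.ofReal_prod_of_nonneg fun _ _ => by positivity,
    ENNReal.ofReal_prod_of_nonneg fun _ _ => by positivity]
  calc (∏ j, ENNReal.ofReal (1 / (1 + |x j| ^ a))) *
        ∏ p ∈ P, ENNReal.ofReal (1 / (1 + |x p.1 - x p.2| ^ b))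
      ≤ (∏ j, ENNReal.ofReal (2 ^ a) * decayWeight a (x j)) *
          ∏ p ∈ P, ENNReal.ofReal (2 ^ b) * decayWeight b (x p.1 - x p.2) := by
        gcongr with j _ p _
        · exact ofReal_one_div_one_add_rpow_le ha _
        · exact ofReal_one_div_one_add_rpow_le hb _
    _ = _ := by
        rw [prod_mul_distrib, prod_mul_distrib, prod_const, prod_const, card_univ]
        ring

/-- Lemma `IntegralFinite`: for `a + (m-1)b/2 > 1` and `ma > 1`, the integral over `ℝ^m` of
`∏_j 1/(1+|x_j|^a) ∏_{i<j} 1/(1+|x_i-x_j|^b)` is finite. -/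
theorem statement8 (m : ℕ) (hm : 1 ≤ m) (a b : ℝ) (ha : 0 ≤ a) (hb : 0 ≤ b)
    (h1 : 1 < a + ((m : ℝ) - 1) * b / 2) (h2 : 1 < (m : ℝ) * a) :
    ∫⁻ x : Fin m → ℝ, ENNReal.ofReal
        ((∏ j, 1 / (1 + |x j| ^ a)) *
          ∏ p ∈ Finset.univ.filter (fun p : Fin m × Fin m => p.1 < p.2),
            1 / (1 + |x p.1 - x p.2| ^ b)) < ⊤ := by
  obtain ⟨n, rfl⟩ : ∃ n, m = n + 1 := ⟨m - 1, by omega⟩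
  push_cast at h1 h2
  obtain ⟨D, hD, hle⟩ := exists_ofReal_integrand_le (ι := Fin (n + 1)) ha hb
  have hγ : min a (b / 2) ≤ b / 2 := min_le_right _ _
  have hnγ : n * min a (b / 2) ≤ n * (b / 2) := mul_le_mul_of_nonneg_left hγ n.cast_nonneg
  have hchain : ∫⁻ x : Fin (n + 1) → ℝ, chainWeight a ((n + 1) * b / 2) x < ⊤ := by
    have h1' : 1 < a + 0 + n * min a (b / 2) := by
      rcases min_cases a (b / 2) with ⟨h, -⟩ | ⟨h, -⟩ <;> rw [h] <;> linarith
    simpa [decayWeight_zero] using lintegral_decayWeight_mul_chainWeight_lt_top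
      (le_min ha (by positivity)) (min_le_left _ _) (by linarith) n le_rfl h1' (by linarith)
  calc _ ≤ ∫⁻ x, D * ∑ σ : Equiv.Perm (Fin (n + 1)), chainWeight a ((n + 1) * b / 2) (x ∘ σ) :=
        lintegral_mono fun x => (hle x).trans
          (mul_le_mul_right (prod_decayWeight_mul_prod_filter_lt_le_sum_chainWeight a hb x) D)
    _ = D * ∑ _σ : Equiv.Perm (Fin (n + 1)), ∫⁻ x, chainWeight a ((n + 1) * b / 2) x := by
        rw [lintegral_const_mul _ (by fun_prop), lintegral_finsetSum _ fun σ _ => by fun_prop]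
        simp only [lintegral_comp_perm]
    _ < ⊤ := mul_lt_top hD.lt_top (sum_lt_top.2 fun _ _ => hchain)
end

section
/- Let β > 0 and t ≥ 0. There exists a constant C > 0, depending only on β and t, such that for every integer N ≥ 1 and all x, y ∈ ℝ with |x − y| ≤ πN: N^{−t/β} · min( N, |e^{ix/N} − e^{iy/N}|^{−1} )^{t/β} ≤ C / (1 + |x − y|^{t/β}) (with the convention that the minimum equals N when e^{ix/N} = e^{iy/N}). -/
/-!
With `u = x / N`, `v = y / N`, Jordan's inequality gives
`‖e^{iu} - e^{iv}‖ = 2 |sin ((u - v) / 2)| ≥ (2 / π) |u - v|` since `|u - v| ≤ π`. Hence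
`g = N⁻¹ min(N, ‖e^{iu} - e^{iv}‖⁻¹)` satisfies `g ≤ 1` and `g |x - y| ≤ π / 2`, so with
`s = t / β ≥ 0` we get `g ^ s (1 + |x - y| ^ s) = g ^ s + (g |x - y|) ^ s ≤ 1 + (π / 2) ^ s`.
-/

open Real

theorem Complex.norm_exp_ofReal_mul_I_sub_exp_ofReal_mul_I (u v : ℝ) :
    ‖Complex.exp (u * Complex.I) - Complex.exp (v * Complex.I)‖ =
      2 * |Real.sin ((u - v) / 2)| := by
  have hfactor : Complex.exp (u * Complex.I) - Complex.exp (v * Complex.I) =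
      Complex.exp (v * Complex.I) * (Complex.exp (Complex.I * (u - v : ℝ)) - 1) := by
    rw [mul_sub, ← Complex.exp_add]; push_cast; ring_nf
  rw [hfactor, norm_mul, Complex.norm_exp_ofReal_mul_I, one_mul,
    Complex.norm_exp_I_mul_ofReal_sub_one, norm_mul, Real.norm_eq_abs, Real.norm_eq_abs, abs_two]

theorem Complex.mul_abs_sub_le_norm_exp_ofReal_mul_I_sub {u v : ℝ} (h : |u - v| ≤ π) :
    2 / π * |u - v| ≤ ‖Complex.exp (u * Complex.I) - Complex.exp (v * Complex.I)‖ := by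
  have hhalf : |(u - v) / 2| ≤ π / 2 := by rw [abs_div, abs_two]; linarith
  have hjordan := Real.mul_abs_le_abs_sin hhalf
  rw [abs_div, abs_two] at hjordan
  rw [Complex.norm_exp_ofReal_mul_I_sub_exp_ofReal_mul_I]
  linarith

theorem ite_min_inv_norm_exp_ofReal_mul_I_sub_bounds {u v N : ℝ} (hN : 0 ≤ N)
    (huv : |u - v| ≤ π) :
    let f := if Complex.exp (u * Complex.I) = Complex.exp (v * Complex.I) then N
      else min N ‖Complex.exp (u * Complex.I) - Complex.exp (v * Complex.I)‖⁻¹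
    0 ≤ f ∧ f ≤ N ∧ f * |u - v| ≤ π / 2 := by
  have hjordan := Complex.mul_abs_sub_le_norm_exp_ofReal_mul_I_sub huv
  split_ifs with heq
  · refine ⟨hN, le_rfl, ?_⟩
    rw [heq, sub_self, norm_zero] at hjordan
    have hzero : |u - v| = 0 :=
      le_antisymm (nonpos_of_mul_nonpos_right hjordan (by positivity)) (abs_nonneg _)
    rw [hzero, mul_zero]
    positivity
  · have hpos : 0 < ‖Complex.exp (u * Complex.I) - Complex.exp (v * Complex.I)‖ :=
      norm_pos_iff.2 (sub_ne_zero.2 heq)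
    refine ⟨le_min hN (inv_nonneg.2 hpos.le), min_le_left _ _, ?_⟩
    calc min N ‖Complex.exp (u * Complex.I) - Complex.exp (v * Complex.I)‖⁻¹ * |u - v|
        ≤ ‖Complex.exp (u * Complex.I) - Complex.exp (v * Complex.I)‖⁻¹ * |u - v| := by
          gcongr
          exact min_le_right _ _
      _ ≤ π / 2 := by
          rw [inv_mul_le_iff₀ hpos]
          calc |u - v| = 2 / π * |u - v| * (π / 2) := by field_simp
            _ ≤ _ := mul_le_mul_of_nonneg_right hjordan (by positivity)

theorem rpow_neg_mul_rpow_le_div_one_add_rpow {N f d c s : ℝ} (hN : 0 < N) (hf : 0 ≤ f)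
    (hfN : f ≤ N) (hd : 0 ≤ d) (hfd : f * d ≤ c * N) (hs : 0 ≤ s) :
    N ^ (-s) * f ^ s ≤ (1 + c ^ s) / (1 + d ^ s) := by
  have hg : 0 ≤ f / N := div_nonneg hf hN.le
  have hgd : f / N * d ≤ c := by rwa [div_mul_eq_mul_div, div_le_iff₀ hN]
  rw [rpow_neg hN.le, inv_mul_eq_div, ← div_rpow hf hN.le, le_div_iff₀ (by positivity),
    mul_one_add, ← mul_rpow hg hd]
  gcongr
  exact rpow_le_one hg ((div_le_one hN).2 hfN) hs

/-- Elementary inequality: `N^{-t/β} min(N, |e^{ix/N} - e^{iy/N}|⁻¹)^{t/β} ≤ C/(1 + |x-y|^{t/β})`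
for `|x - y| ≤ πN`, with `C` depending only on `β` and `t`; by convention the minimum is `N`
when `e^{ix/N} = e^{iy/N}`. -/
theorem statement13 (β t : ℝ) (hβ : 0 < β) (ht : 0 ≤ t) :
    ∃ C > 0, ∀ N : ℕ, 1 ≤ N → ∀ x y : ℝ, |x - y| ≤ π * N →
      (N : ℝ) ^ (-(t / β)) *
        (if Complex.exp ((↑(x / N) : ℂ) * Complex.I) = Complex.exp ((↑(y / N) : ℂ) * Complex.I)
          then (N : ℝ)
          else min (N : ℝ)
            ‖Complex.exp ((↑(x / N) : ℂ) * Complex.I)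
              - Complex.exp ((↑(y / N) : ℂ) * Complex.I)‖⁻¹) ^ (t / β)
      ≤ C / (1 + |x - y| ^ (t / β)) := by
  refine ⟨1 + (π / 2) ^ (t / β), by positivity, fun N hN x y hxy => ?_⟩
  have hN0 : (0 : ℝ) < N := by exact_mod_cast hN
  have hscaled : |x / N - y / N| = |x - y| / N := by rw [← sub_div, abs_div, abs_of_pos hN0]
  obtain ⟨hf0, hfN, hfd⟩ := ite_min_inv_norm_exp_ofReal_mul_I_sub_bounds (u := x / N)
    (v := y / N) hN0.le (by rwa [hscaled, div_le_iff₀ hN0])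
  rw [hscaled, mul_div_assoc', div_le_iff₀ hN0] at hfd
  exact rpow_neg_mul_rpow_le_div_one_add_rpow hN0 hf0 hfN (abs_nonneg _) hfd
    (div_nonneg ht hβ.le)
end

section
/- Let β > 0, let p ≥ 1 be an integer, and let n be a positive real number with n ≥ (2/β)(4p + 2). Let X be a real random variable with density x ↦ (β/2)·n·(1 − x)^{(β/2)n − 1} on [0,1]. Then Σ_{k=2}^∞ (k+1)^{2p} E[X^k] ≤ 288 (2p)! / (β² n²). -/
/-!
Write `A = βn/2` and `q = 2p`, so that `X ~ Beta(1, A)` and `A ≥ 2q + 2`. Termwise,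
`(k+3)^q ≤ (9/2) q! C(k+q, q)`, and `Σ_k C(k+q, q) x^k = (1-x)^{-(q+1)}`, so the series is at most
`(9/2) q! E[X² (1-X)^{-(q+1)}] = (9/2) q! A B(3, A-q-1) = 9 q! A / ((A-q-1)(A-q)(A-q+1))`.
Each factor of the denominator is at least `A/2`, which gives `72 q! / A² = 288 q! / (β² n²)`.
-/

open MeasureTheory ProbabilityTheory Set Finset

lemma two_mul_pow_le_nine_mul_ascFactorial (k p : ℕ) :
    2 * (k + 3) ^ (2 * p) ≤ 9 * (k + 1).ascFactorial (2 * p) := by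
  induction p with
  | zero => simp
  | succ p ih =>
    rw [show 2 * (p + 1) = 2 * p + 1 + 1 by ring, pow_succ, pow_succ, Nat.ascFactorial_succ,
      Nat.ascFactorial_succ]
    rcases p with _ | p
    · simp only [mul_zero, zero_add, Nat.ascFactorial_zero, pow_zero]
      nlinarith
    · have hsq : (k + 3) * (k + 3) ≤ (k + 1 + (2 * (p + 1) + 1)) * (k + 1 + 2 * (p + 1)) := by
        nlinarith
      calc 2 * ((k + 3) ^ (2 * (p + 1)) * (k + 3) * (k + 3))
          = 2 * (k + 3) ^ (2 * (p + 1)) * ((k + 3) * (k + 3)) := by ring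
        _ ≤ 9 * (k + 1).ascFactorial (2 * (p + 1)) *
            ((k + 1 + (2 * (p + 1) + 1)) * (k + 1 + 2 * (p + 1))) := Nat.mul_le_mul ih hsq
        _ = _ := by ring

lemma add_three_pow_le_mul_choose (k p : ℕ) :
    ((k : ℝ) + 3) ^ (2 * p) ≤ 9 / 2 * (2 * p).factorial * ((k + 2 * p).choose (2 * p) : ℝ) := by
  have h := two_mul_pow_le_nine_mul_ascFactorial k p
  rw [Nat.ascFactorial_eq_factorial_mul_choose] at h
  have h' : 2 * ((k : ℝ) + 3) ^ (2 * p) ≤ 9 * ((2 * p).factorial * (k + 2 * p).choose (2 * p)) := by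
    exact_mod_cast h
  linarith

lemma sum_range_choose_mul_pow_mul_one_sub_pow_le_one (q N : ℕ) {x : ℝ} (hx₀ : 0 ≤ x)
    (hx₁ : x ≤ 1) :
    (∑ k ∈ range N, ((k + q).choose q : ℝ) * x ^ k) * (1 - x) ^ (q + 1) ≤ 1 := by
  rcases hx₁.eq_or_lt with rfl | hx₁
  · simp
  have hpos : 0 < (1 - x) ^ (q + 1) := pow_pos (by linarith) _
  have hsum := hasSum_choose_mul_geometric_of_norm_lt_one q
    (show ‖x‖ < 1 by rwa [Real.norm_of_nonneg hx₀])
  calc (∑ k ∈ range N, ((k + q).choose q : ℝ) * x ^ k) * (1 - x) ^ (q + 1)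
      ≤ 1 / (1 - x) ^ (q + 1) * (1 - x) ^ (q + 1) :=
        mul_le_mul_of_nonneg_right
          (sum_le_hasSum _ (fun k _ => by positivity) hsum) hpos.le
    _ = 1 := one_div_mul_cancel hpos.ne'

lemma integral_rpow_zero_one {r : ℝ} (hr : -1 < r) : ∫ x in (0 : ℝ)..1, x ^ r = 1 / (r + 1) := by
  rw [integral_rpow (Or.inl hr), Real.one_rpow, Real.zero_rpow (by linarith), sub_zero]

lemma integral_sq_mul_one_sub_rpow {s : ℝ} (hs : 0 < s) :
    ∫ x in (0 : ℝ)..1, x ^ 2 * (1 - x) ^ (s - 1) = 2 / (s * (s + 1) * (s + 2)) := by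
  have hsub := intervalIntegral.integral_comp_sub_left
    (fun y : ℝ => (1 - y) ^ 2 * y ^ (s - 1)) (a := 0) (b := 1) 1
  simp only [sub_sub_cancel, sub_zero, sub_self] at hsub
  have hexpand : ∀ y ∈ uIcc (0 : ℝ) 1, (1 - y) ^ 2 * y ^ (s - 1)
      = y ^ (s - 1) - 2 * y ^ s + y ^ (s + 1) := by
    intro y hy
    rw [Set.uIcc_of_le zero_le_one] at hy
    have h1 : y ^ s = y ^ (s - 1) * y := by
      rw [← Real.rpow_add_one' hy.1 (by linarith), sub_add_cancel]
    have h2 : y ^ (s + 1) = y ^ (s - 1) * y ^ 2 := by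
      rw [← Real.rpow_two, ← Real.rpow_add' hy.1 (by linarith)]
      ring_nf
    rw [h1, h2]
    ring
  have hint : ∀ r : ℝ, -1 < r → IntervalIntegrable (fun y : ℝ => y ^ r) volume 0 1 :=
    fun r hr => intervalIntegral.intervalIntegrable_rpow' hr
  rw [hsub, intervalIntegral.integral_congr hexpand,
    intervalIntegral.integral_add ((hint _ (by linarith)).sub ((hint _ (by linarith)).const_mul 2))
      (hint _ (by linarith)),
    intervalIntegral.integral_sub (hint _ (by linarith)) ((hint _ (by linarith)).const_mul 2),
    intervalIntegral.integral_const_mul, integral_rpow_zero_one (by linarith),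
    integral_rpow_zero_one (by linarith), integral_rpow_zero_one (by linarith), sub_add_cancel]
  field_simp
  ring

lemma sum_choose_mul_integral_le {A : ℝ} {q : ℕ} (hA : (q : ℝ) + 1 < A) (N : ℕ) :
    ∑ k ∈ range N, ((k + q).choose q : ℝ) *
        ∫ x in (0 : ℝ)..1, A * (1 - x) ^ (A - 1) * x ^ (k + 2)
      ≤ 2 * A / ((A - q - 1) * (A - q) * (A - q + 1)) := by
  have hs : 0 < A - q - 1 := by linarith
  have hcont : ∀ k : ℕ, Continuous fun x : ℝ => A * (1 - x) ^ (A - 1) * x ^ (k + 2) := fun k =>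
    (continuous_const.mul ((continuous_const.sub continuous_id).rpow_const
      fun _ => Or.inr (by linarith))).mul (continuous_pow _)
  have hbound : ∀ x ∈ Icc (0 : ℝ) 1, ∑ k ∈ range N, ((k + q).choose q : ℝ) *
      (A * (1 - x) ^ (A - 1) * x ^ (k + 2)) ≤ A * (x ^ 2 * (1 - x) ^ (A - q - 1 - 1)) := by
    rintro x ⟨hx₀, hx₁⟩
    have hsplit : (1 - x) ^ (A - 1) = (1 - x) ^ (A - q - 1 - 1) * (1 - x) ^ (q + 1) := by
      rw [← Real.rpow_natCast, ← Real.rpow_add' (by linarith) (by push_cast; linarith)]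
      push_cast
      ring_nf
    calc ∑ k ∈ range N, ((k + q).choose q : ℝ) * (A * (1 - x) ^ (A - 1) * x ^ (k + 2))
        = A * (x ^ 2 * (1 - x) ^ (A - q - 1 - 1)) *
            ((∑ k ∈ range N, ((k + q).choose q : ℝ) * x ^ k) * (1 - x) ^ (q + 1)) := by
          rw [hsplit, sum_mul, mul_sum]
          refine sum_congr rfl fun k _ => ?_
          ring
      _ ≤ A * (x ^ 2 * (1 - x) ^ (A - q - 1 - 1)) * 1 := by
          gcongr
          · exact mul_nonneg (by linarith) (mul_nonneg (sq_nonneg x)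
              (Real.rpow_nonneg (by linarith) _))
          · exact sum_range_choose_mul_pow_mul_one_sub_pow_le_one q N hx₀ hx₁
      _ = A * (x ^ 2 * (1 - x) ^ (A - q - 1 - 1)) := mul_one _
  have hbeta := integral_sq_mul_one_sub_rpow hs
  calc ∑ k ∈ range N, ((k + q).choose q : ℝ) *
        ∫ x in (0 : ℝ)..1, A * (1 - x) ^ (A - 1) * x ^ (k + 2)
      = ∫ x in (0 : ℝ)..1, ∑ k ∈ range N, ((k + q).choose q : ℝ) *
          (A * (1 - x) ^ (A - 1) * x ^ (k + 2)) := by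
        rw [intervalIntegral.integral_finsetSum fun k _ =>
          ((hcont k).intervalIntegrable 0 1).const_mul _]
        simp only [intervalIntegral.integral_const_mul]
    -- the majorant need not be continuous at 1 (`A - q - 2` may be negative); it is integrable
    -- because its integral is not zero
    _ ≤ ∫ x in (0 : ℝ)..1, A * (x ^ 2 * (1 - x) ^ (A - q - 1 - 1)) :=
        intervalIntegral.integral_mono_on zero_le_one
          ((continuous_finsetSum _ fun k _ => continuous_const.mul (hcont k)).intervalIntegrable 0 1)
          ((intervalIntegral.intervalIntegrable_of_integral_ne_zero
            (by rw [hbeta]; positivity)).const_mul A)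
          hbound
    _ = 2 * A / ((A - q - 1) * (A - q) * (A - q + 1)) := by
        rw [intervalIntegral.integral_const_mul, hbeta]
        ring

lemma pow_three_div_eight_le {A q : ℝ} (hq : 0 ≤ q) (hA : 2 * q + 2 ≤ A) :
    A ^ 3 / 8 ≤ (A - q - 1) * (A - q) * (A - q + 1) := by
  calc A ^ 3 / 8 = A / 2 * (A / 2) * (A / 2) := by ring
    _ ≤ _ := mul_le_mul (mul_le_mul (by linarith) (by linarith) (by linarith) (by linarith))
        (by linarith) (by linarith) (mul_nonneg (by linarith) (by linarith))

lemma integral_comp_eq_intervalIntegral_of_map_eq_withDensity {Ω : Type*} [MeasureSpace Ω]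
    {X : Ω → ℝ} (hX : Measurable X) {g : ℝ → ℝ} (hg : Measurable g)
    (hg₀ : ∀ x ∈ Icc (0 : ℝ) 1, 0 ≤ g x)
    (hlaw : Measure.map X ℙ = (volume.restrict (Icc (0 : ℝ) 1)).withDensity
        (fun x => ENNReal.ofReal (g x)))
    {f : ℝ → ℝ} (hf : Measurable f) :
    ∫ ω, f (X ω) ∂ℙ = ∫ x in (0 : ℝ)..1, g x * f x := by
  rw [← integral_map hX.aemeasurable hf.aestronglyMeasurable, hlaw,
    integral_withDensity_eq_integral_toReal_smul hg.ennreal_ofReal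
      (ae_of_all _ fun _ => ENNReal.ofReal_lt_top),
    intervalIntegral.integral_of_le zero_le_one, ← integral_Icc_eq_integral_Ioc]
  refine setIntegral_congr_fun measurableSet_Icc fun x hx => ?_
  rw [ENNReal.toReal_ofReal (hg₀ x hx), smul_eq_mul]

theorem statement17_general (β : ℝ) (hβ : 0 < β) (p : ℕ) (n : ℝ)
    (hn : (2 / β) * (4 * (p : ℝ) + 2) ≤ n)
    {Ω : Type*} [MeasureSpace Ω]
    (X : Ω → ℝ) (hX : Measurable X)
    (hlaw : Measure.map X ℙ = (volume.restrict (Set.Icc (0 : ℝ) 1)).withDensity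
        (fun x => ENNReal.ofReal ((β / 2) * n * (1 - x) ^ ((β / 2) * n - 1)))) :
    ∑' k : ℕ, ((k : ℝ) + 3) ^ (2 * p) * ∫ ω, X ω ^ (k + 2) ∂(ℙ : Measure Ω)
      ≤ 288 * (Nat.factorial (2 * p) : ℝ) / (β ^ 2 * n ^ 2) := by
  set A := β / 2 * n with hA_def
  have hA : 4 * (p : ℝ) + 2 ≤ A :=
    calc 4 * (p : ℝ) + 2 = β / 2 * (2 / β * (4 * p + 2)) := by field_simp
      _ ≤ A := mul_le_mul_of_nonneg_left hn (by positivity)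
  have hdensity : ∀ x ∈ Icc (0 : ℝ) 1, 0 ≤ A * (1 - x) ^ (A - 1) := fun x hx =>
    mul_nonneg (by linarith) (Real.rpow_nonneg (by linarith [hx.2]) _)
  have hmoment (m : ℕ) : ∫ ω, X ω ^ m ∂ℙ = ∫ x in (0 : ℝ)..1, A * (1 - x) ^ (A - 1) * x ^ m :=
    integral_comp_eq_intervalIntegral_of_map_eq_withDensity hX (by fun_prop) hdensity hlaw
      (measurable_id.pow_const m)
  have hmoment_nonneg (m : ℕ) : 0 ≤ ∫ ω, X ω ^ m ∂ℙ := by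
    rw [hmoment]
    exact intervalIntegral.integral_nonneg zero_le_one fun x hx =>
      mul_nonneg (hdensity x hx) (pow_nonneg hx.1 m)
  have hcube := pow_three_div_eight_le (A := A) (q := ((2 * p : ℕ) : ℝ)) (by positivity)
    (by push_cast; linarith)
  refine Real.tsum_le_of_sum_range_le
    (fun k => mul_nonneg (by positivity) (hmoment_nonneg _)) fun N => ?_
  calc ∑ k ∈ range N, ((k : ℝ) + 3) ^ (2 * p) * ∫ ω, X ω ^ (k + 2) ∂ℙ
      ≤ 9 / 2 * (2 * p).factorial * ∑ k ∈ range N, ((k + 2 * p).choose (2 * p) : ℝ) *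
          ∫ x in (0 : ℝ)..1, A * (1 - x) ^ (A - 1) * x ^ (k + 2) := by
        rw [mul_sum]
        refine sum_le_sum fun k _ => ?_
        rw [← mul_assoc, ← hmoment]
        exact mul_le_mul_of_nonneg_right (add_three_pow_le_mul_choose k p) (hmoment_nonneg _)
    _ ≤ 9 / 2 * (2 * p).factorial *
          (2 * A / ((A - (2 * p : ℕ) - 1) * (A - (2 * p : ℕ)) * (A - (2 * p : ℕ) + 1))) := by
        gcongr
        exact sum_choose_mul_integral_le (by push_cast; linarith) N
    _ ≤ 9 / 2 * (2 * p).factorial * (2 * A / (A ^ 3 / 8)) := by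
        gcongr 9 / 2 * _ * ?_
        exact div_le_div_of_nonneg_left (by linarith)
          (div_pos (pow_pos (by linarith) 3) (by norm_num)) hcube
    _ = 288 * (2 * p).factorial / (β ^ 2 * n ^ 2) := by
        rw [hA_def]
        field_simp
        ring

/-- For `X` Beta(1, (β/2)n)-distributed with `n ≥ (2/β)(4p+2)`:
`Σ_{k=2}^∞ (k+1)^{2p} E[X^k] ≤ 288 (2p)!/(β² n²)`. (The series is re-indexed by `k ↦ k + 2`.) -/
theorem statement17 (β : ℝ) (hβ : 0 < β) (p : ℕ) (hp : 1 ≤ p) (n : ℝ)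
    (hn : (2 / β) * (4 * (p : ℝ) + 2) ≤ n)
    {Ω : Type*} [MeasureSpace Ω] [IsProbabilityMeasure (ℙ : Measure Ω)]
    (X : Ω → ℝ) (hX : Measurable X)
    (hlaw : Measure.map X ℙ = (volume.restrict (Set.Icc (0 : ℝ) 1)).withDensity
        (fun x => ENNReal.ofReal ((β / 2) * n * (1 - x) ^ ((β / 2) * n - 1)))) :
    ∑' k : ℕ, ((k : ℝ) + 3) ^ (2 * p) * ∫ ω, X ω ^ (k + 2) ∂(ℙ : Measure Ω)
      ≤ 288 * (Nat.factorial (2 * p) : ℝ) / (β ^ 2 * n ^ 2) :=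
  statement17_general β hβ p n hn X hX hlaw
end

section
/- For every integer p ≥ 1 and every x ∈ [0,1): x² (1 − x)^{−2p−1} ≥ (2/(9 · (2p)!)) · Σ_{k=2}^∞ (k+1)^{2p} x^k, both sides being finite. -/
/-!
Expanding `(1 - x)^{-(n+1)} = ∑ₖ C(k+n, n) xᵏ`, it suffices to compare coefficients:
`n! · C(k+n, n) = (k+1)(k+2)⋯(k+n)`, whose first two factors are at least `(2/9)(k+3)²`
(equality at `k = 0`) and whose remaining factors are at least `k + 3`.
-/

open Nat

theorem two_ninths_mul_pow_le_ascFactorial (k n : ℕ) :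
    (2 / 9 : ℝ) * ((k : ℝ) + 3) ^ n ≤ (k + 1).ascFactorial n := by
  have hk : (0 : ℝ) ≤ k := k.cast_nonneg
  match n with
  | 0 => norm_num
  | 1 =>
    simp only [ascFactorial_succ, ascFactorial_zero, cast_mul, cast_add, cast_zero, cast_one]
    linarith
  | m + 2 =>
    have hsplit : (k + 1).ascFactorial (m + 2) = (k + 1) * (k + 2) * (k + 3).ascFactorial m := by
      rw [add_comm m, ← ascFactorial_mul_ascFactorial]
      simp only [ascFactorial_succ, ascFactorial_zero]
      ring
    have htail : ((k : ℝ) + 3) ^ m ≤ (k + 3).ascFactorial m := by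
      exact_mod_cast pow_succ_le_ascFactorial (k + 3) m
    rw [hsplit]
    push_cast
    calc (2 / 9 : ℝ) * ((k : ℝ) + 3) ^ (m + 2)
          = 2 / 9 * ((k : ℝ) + 3) ^ 2 * ((k : ℝ) + 3) ^ m := by ring
      _ ≤ ((k : ℝ) + 1) * (k + 2) * ((k : ℝ) + 3) ^ m := by
          refine mul_le_mul_of_nonneg_right ?_ (by positivity)
          nlinarith
      _ ≤ ((k : ℝ) + 1) * (k + 2) * (k + 3).ascFactorial m := by gcongr

theorem two_div_nine_factorial_mul_pow_le_choose (k n : ℕ) :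
    2 / (9 * n ! : ℝ) * ((k : ℝ) + 3) ^ n ≤ (k + n).choose n := by
  have h := two_ninths_mul_pow_le_ascFactorial k n
  rw [ascFactorial_eq_factorial_mul_choose, cast_mul] at h
  have hfac : (0 : ℝ) < n ! := mod_cast n.factorial_pos
  rw [div_mul_eq_mul_div, div_le_iff₀ (by positivity)]
  linarith

theorem summable_add_three_pow_mul_geometric_and_tsum_le (n : ℕ) {x : ℝ} (hx0 : 0 ≤ x)
    (hx1 : x < 1) :
    Summable (fun k : ℕ => ((k : ℝ) + 3) ^ n * x ^ (k + 2)) ∧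
      2 / (9 * n ! : ℝ) * ∑' k : ℕ, ((k : ℝ) + 3) ^ n * x ^ (k + 2) ≤
        x ^ 2 / (1 - x) ^ (n + 1) := by
  set c : ℝ := 2 / (9 * n ! : ℝ)
  have hc : 0 < c := by positivity
  have hnorm : ‖x‖ < 1 := by rwa [Real.norm_of_nonneg hx0]
  have hg : HasSum (fun k : ℕ => x ^ 2 * (((k + n).choose n : ℝ) * x ^ k))
      (x ^ 2 * (1 / (1 - x) ^ (n + 1))) :=
    (hasSum_choose_mul_geometric_of_norm_lt_one n hnorm).mul_left (x ^ 2)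
  have hterm (k : ℕ) : c * (((k : ℝ) + 3) ^ n * x ^ (k + 2)) ≤
      x ^ 2 * (((k + n).choose n : ℝ) * x ^ k) := by
    calc c * (((k : ℝ) + 3) ^ n * x ^ (k + 2))
          = c * ((k : ℝ) + 3) ^ n * x ^ k * x ^ 2 := by ring
      _ ≤ ((k + n).choose n : ℝ) * x ^ k * x ^ 2 := by
          gcongr
          exact two_div_nine_factorial_mul_pow_le_choose k n
      _ = x ^ 2 * (((k + n).choose n : ℝ) * x ^ k) := by ring
  have hcf : Summable (fun k : ℕ => c * (((k : ℝ) + 3) ^ n * x ^ (k + 2))) :=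
    hg.summable.of_nonneg_of_le (fun k => by positivity) hterm
  refine ⟨(summable_mul_left_iff hc.ne').mp hcf, ?_⟩
  rw [← tsum_mul_left, div_eq_mul_one_div]
  exact hasSum_le hterm hcf.hasSum hg

theorem statement18_general (p : ℕ) (x : ℝ) (hx0 : 0 ≤ x) (hx1 : x < 1) :
    Summable (fun k : ℕ => ((k : ℝ) + 3) ^ (2 * p) * x ^ (k + 2)) ∧
    (2 / (9 * (Nat.factorial (2 * p) : ℝ)))
        * ∑' k : ℕ, ((k : ℝ) + 3) ^ (2 * p) * x ^ (k + 2)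
      ≤ x ^ 2 * (1 - x) ^ (-(2 * (p : ℝ)) - 1) := by
  have hrpow : (1 - x) ^ (-(2 * (p : ℝ)) - 1) = ((1 - x) ^ (2 * p + 1))⁻¹ := by
    rw [show -(2 * (p : ℝ)) - 1 = -((2 * p + 1 : ℕ) : ℝ) by push_cast; ring,
      Real.rpow_neg (by linarith), Real.rpow_natCast]
  rw [hrpow, ← div_eq_mul_inv]
  exact summable_add_three_pow_mul_geometric_and_tsum_le (2 * p) hx0 hx1

/-- For `p ≥ 1` and `x ∈ [0,1)`:
`x² (1-x)^{-2p-1} ≥ (2/(9·(2p)!)) Σ_{k=2}^∞ (k+1)^{2p} x^k`, and the series converges.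
(The series is re-indexed by `k ↦ k + 2`.) -/
theorem statement18 (p : ℕ) (hp : 1 ≤ p) (x : ℝ) (hx0 : 0 ≤ x) (hx1 : x < 1) :
    Summable (fun k : ℕ => ((k : ℝ) + 3) ^ (2 * p) * x ^ (k + 2)) ∧
    (2 / (9 * (Nat.factorial (2 * p) : ℝ)))
        * ∑' k : ℕ, ((k : ℝ) + 3) ^ (2 * p) * x ^ (k + 2)
      ≤ x ^ 2 * (1 - x) ^ (-(2 * (p : ℝ)) - 1) :=
  statement18_general p x hx0 hx1
end
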